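/- Let s(γ, δ) = γδ/(γδ + (1−α)(r+δ)) with α ∈ (0,1), r > 0. For all γ ∈ [0.02, 0.08], δ ∈ [0.08, 0.25], α ∈ [0.33, 0.40], and r ∈ [0.03, 0.05], we have s(γ, δ) < 0.11. -/
import Mathlib

theorem stmt16 (α γ r δ : ℝ)
    (hγ : γ ∈ Set.Icc (0.02:ℝ) 0.08) (hδ : δ ∈ Set.Icc (0.08:ℝ) 0.25)
    (hα : α ∈ Set.Icc (0.33:ℝ) 0.40) (hr : r ∈ Set.Icc (0.03:ℝ) 0.05) :
    γ * δ / (γ * δ + (1 - α) * (r + δ)) < 0.11 := by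
  obtain ⟨hγ1, hγ2⟩ := hγ
  obtain ⟨hδ1, hδ2⟩ := hδ
  obtain ⟨hα1, hα2⟩ := hα
  obtain ⟨hr1, hr2⟩ := hr
  have hpos : 0 < γ * δ + (1 - α) * (r + δ) := by nlinarith
  rw [div_lt_iff₀ hpos]
  nlinarith [mul_le_mul_of_nonneg_right hγ2 (by linarith : (0:ℝ) ≤ δ),
    mul_le_mul (by linarith : (0.6:ℝ) ≤ 1 - α) (by linarith : 0.03 + δ ≤ r + δ) (by linarith) (by linarith)]
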